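/- arXiv:2508.03648 — 7 statements merged into one kernel-verified Lean document; each statement's English description precedes it below -/
import Mathlib

section
/- For every integer n ≥ 4, the semidihedral group SD_{2^n} of order 2^n, given by the presentation ⟨r, s | r^{2^{n-1}} = s² = 1, s r s = r^{2^{n-2}-1}⟩, is not a CCS group; that is, it possesses a proper non-cyclic characteristic subgroup. -/
/-- A finite group is a `CCS` group if it is not cyclic, it has a nontrivial proper
characteristic subgroup, and every proper characteristic subgroup is cyclic. -/
def IsCCS (G : Type*) [Group G] : Prop :=
  ¬ IsCyclic G ∧
  (∃ N : Subgroup G, N.Characteristic ∧ N ≠ ⊥ ∧ N ≠ ⊤) ∧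
  ∀ N : Subgroup G, N.Characteristic → N ≠ ⊤ → IsCyclic N

section Aux

variable {G : Type*} [Group G]

private lemma conj_mem_zpowers {s t : G} (hss : s * s = 1)
    (hst : s * t * s ∈ Subgroup.zpowers t) {x : G}
    (hx : x ∈ Subgroup.zpowers t) : s * x * s ∈ Subgroup.zpowers t := by
  have hsinv : s⁻¹ = s := inv_eq_of_mul_eq_one_right hss
  obtain ⟨k, rfl⟩ := hx
  have h : (s * t * s⁻¹) ^ k = s * t ^ k * s⁻¹ := conj_zpow
  rw [hsinv] at h
  rw [← h]
  exact zpow_mem hst k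

/-- The union of `zpowers t` and its coset by an involution `s` normalizing it,
as a subgroup. -/
private def cosetUnion (s t : G) (hss : s * s = 1)
    (hst : s * t * s ∈ Subgroup.zpowers t) : Subgroup G where
  carrier := {x | x ∈ Subgroup.zpowers t ∨ s * x ∈ Subgroup.zpowers t}
  one_mem' := Or.inl (one_mem _)
  mul_mem' := by
    have hmul : ∀ x : G, s * (s * x) = x := fun x => by
      rw [← mul_assoc, hss, one_mul]
    rintro a b (ha | ha) (hb | hb)
    · exact Or.inl (mul_mem ha hb)
    · refine Or.inr ?_
      have h : s * (a * b) = (s * a * s) * (s * b) := by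
        simp [mul_assoc, hmul]
      rw [h]
      exact mul_mem (conj_mem_zpowers hss hst ha) hb
    · refine Or.inr ?_
      rw [← mul_assoc]
      exact mul_mem ha hb
    · refine Or.inl ?_
      have h : a * b = (s * (s * a) * s) * (s * b) := by
        simp [mul_assoc, hmul]
      rw [h]
      exact mul_mem (conj_mem_zpowers hss hst ha) hb
  inv_mem' := by
    rintro a (ha | ha)
    · exact Or.inl (inv_mem ha)
    · refine Or.inr ?_
      have hsinv : s⁻¹ = s := inv_eq_of_mul_eq_one_right hss
      have h : s * a⁻¹ = s * (s * a)⁻¹ * s := by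
        rw [mul_inv_rev, hsinv, mul_assoc, mul_assoc, hss, mul_one]
      rw [h]
      exact conj_mem_zpowers hss hst (inv_mem ha)

private lemma mem_cosetUnion {s t x : G} {hss : s * s = 1}
    {hst : s * t * s ∈ Subgroup.zpowers t} :
    x ∈ cosetUnion s t hss hst ↔
      x ∈ Subgroup.zpowers t ∨ s * x ∈ Subgroup.zpowers t := Iff.rfl

end Aux

/-- The semidihedral group `SD_{2^n}` (`n ≥ 4`), i.e. the group of order `2^n` with
presentation `⟨r, s | r^(2^(n-1)) = s² = 1, s r s = r^(2^(n-2) - 1)⟩`, is not a CCS group: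
it has a proper non-cyclic characteristic subgroup. -/
theorem semidihedral_not_CCS (n : ℕ) (hn : 4 ≤ n)
    (G : Type*) [Group G] [Finite G] (r s : G)
    (hgen : Subgroup.closure ({r, s} : Set G) = ⊤)
    (hr : r ^ (2 ^ (n - 1)) = 1) (hs : s ^ 2 = 1)
    (hrs : s * r * s = r ^ (2 ^ (n - 2) - 1))
    (hcard : Nat.card G = 2 ^ n) :
    ¬ IsCCS G ∧ ∃ H : Subgroup G, H.Characteristic ∧ H ≠ ⊤ ∧ ¬ IsCyclic H := by
  classical
  obtain ⟨k, rfl⟩ := Nat.exists_eq_add_of_le hn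
  rw [show 4 + k - 1 = k + 3 from by omega] at hr
  rw [show 4 + k - 2 = k + 2 from by omega] at hrs
  rw [show 4 + k = k + 4 from by omega] at hcard
  have hss : s * s = 1 := by rw [← sq]; exact hs
  have hsinv : s⁻¹ = s := inv_eq_of_mul_eq_one_right hss
  have hmul : ∀ x : G, s * (s * x) = x := fun x => by
    rw [← mul_assoc, hss, one_mul]
  set M : ℕ := 2 ^ (k + 2) - 1 with hM
  have hM1 : (M : ℤ) + 1 = 2 ^ (k + 2) := by
    have : M + 1 = 2 ^ (k + 2) := Nat.sub_add_cancel Nat.one_le_two_pow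
    exact_mod_cast this
  -- conjugation facts
  have hconj : s * r * s = r ^ (M : ℤ) := by rw [zpow_natCast]; exact hrs
  have hconjz : ∀ j : ℤ, s * r ^ j * s = r ^ ((M : ℤ) * j) := by
    intro j
    have h : (s * r * s⁻¹) ^ j = s * r ^ j * s⁻¹ := conj_zpow
    rw [hsinv] at h
    rw [← h, hconj, ← zpow_mul]
  have hst : s * r * s ∈ Subgroup.zpowers r :=
    Subgroup.mem_zpowers_iff.mpr ⟨(M : ℤ), hconj.symm⟩
  have hpow2 : ∀ i : ℤ, ((r ^ 2 : G)) ^ i = r ^ (2 * i) := by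
    intro i
    rw [← zpow_natCast r 2, ← zpow_mul]
    norm_num
  have hst2 : s * r ^ 2 * s ∈ Subgroup.zpowers (r ^ 2) := by
    have h1 : s * r ^ 2 * s = (s * r * s) * (s * r * s) := by
      simp [pow_two, mul_assoc, hmul]
    have h2 : s * r ^ 2 * s = (r ^ 2 : G) ^ (M : ℤ) := by
      rw [h1, hconj, ← zpow_add, hpow2]
      congr 1
      ring
    exact Subgroup.mem_zpowers_iff.mpr ⟨(M : ℤ), h2.symm⟩
  -- the whole group: membership test via generators
  have htop : ∀ K : Subgroup G, r ∈ K → s ∈ K → ∀ g : G, g ∈ K := by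
    intro K h1 h2 g
    have hle : Subgroup.closure ({r, s} : Set G) ≤ K := by
      rw [Subgroup.closure_le]
      intro x hx
      rcases hx with h | h
      · rw [h]; exact h1
      · rw [h]; exact h2
    exact hle (hgen ▸ Subgroup.mem_top g)
  set C : Subgroup G := Subgroup.zpowers r with hC
  have hU : ∀ g : G, g ∈ C ∨ s * g ∈ C := by
    intro g
    refine mem_cosetUnion.mp (htop (cosetUnion s r hss hst) ?_ ?_ g)
    · exact mem_cosetUnion.mpr (Or.inl (Subgroup.mem_zpowers r))
    · refine mem_cosetUnion.mpr (Or.inr ?_)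
      rw [hss]
      exact one_mem _
  -- cardinality: |G| ≤ 2 |C|
  have hsurj : Function.Surjective
      (fun p : C × Bool => if p.2 then s * (p.1 : G) else (p.1 : G)) := by
    intro g
    rcases hU g with h | h
    · exact ⟨(⟨g, h⟩, false), rfl⟩
    · refine ⟨(⟨s * g, h⟩, true), ?_⟩
      simp only [if_true]
      rw [← mul_assoc, hss, one_mul]
  have hcardle : Nat.card G ≤ Nat.card C * 2 := by
    have := Nat.card_le_card_of_surjective _ hsurj
    rwa [Nat.card_prod, Nat.card_eq_fintype_card (α := Bool), Fintype.card_bool] at this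
  have hcardC : Nat.card C = orderOf r := Nat.card_zpowers r
  have hord_dvd : orderOf r ∣ 2 ^ (k + 3) := orderOf_dvd_of_pow_eq_one hr
  have hord : orderOf r = 2 ^ (k + 3) := by
    have h1 : orderOf r ≤ 2 ^ (k + 3) := Nat.le_of_dvd (by positivity) hord_dvd
    have h2 : 2 ^ (k + 4) ≤ orderOf r * 2 := by
      rw [← hcardC, ← hcard]; exact hcardle
    have h3 : (2:ℕ) ^ (k + 4) = 2 ^ (k + 3) * 2 := by ring
    omega
  have hsC : s ∉ C := by
    intro hsc
    have hCtop : ∀ g : G, g ∈ C := htop C (Subgroup.mem_zpowers r) hsc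
    have hCeq : C = ⊤ := by
      ext g; simp [hCtop g]
    have hCG : Nat.card C = Nat.card G := by
      rw [hCeq]
      exact Nat.card_congr Subgroup.topEquiv.toEquiv
    rw [hcardC, hord, hcard] at hCG
    have : (2 : ℕ) ^ (k + 3) < 2 ^ (k + 4) := Nat.pow_lt_pow_right (by norm_num) (by omega)
    omega
  have hdvd_ord : ∀ j : ℤ, r ^ j = 1 → ((2 : ℤ) ^ (k + 3)) ∣ j := by
    intro j hj
    have := orderOf_dvd_iff_zpow_eq_one.mpr hj
    rwa [hord, Nat.cast_pow, Nat.cast_ofNat] at this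
  -- the subgroup E = ⟨r²⟩ ∪ s⟨r²⟩
  set E : Subgroup G := cosetUnion s (r ^ 2) hss hst2 with hE
  -- H = closure of involutions
  set S : Set G := {g : G | g ^ 2 = 1} with hS
  set H : Subgroup G := Subgroup.closure S with hH
  -- every involution lies in E
  have hsubE : H ≤ E := by
    rw [hH, Subgroup.closure_le]
    intro g hg
    have hg2 : g ^ 2 = 1 := hg
    rcases hU g with h | h
    · obtain ⟨j, hj⟩ := Subgroup.mem_zpowers_iff.mp h
      refine Or.inl ?_
      have h1 : r ^ (j * 2) = 1 := by
        have h0 : (r ^ j) ^ (2 : ℕ) = 1 := by rw [hj]; exact hg2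
        rwa [← zpow_natCast (r ^ j) 2, ← zpow_mul,
          show ((2 : ℕ) : ℤ) = 2 from by norm_num] at h0
      obtain ⟨c, hc⟩ := hdvd_ord _ h1
      have hj2 : j = 2 ^ (k + 2) * c := by
        have h5 : j * 2 = (2 ^ (k + 2) * c) * 2 := by rw [hc]; ring
        exact mul_right_cancel₀ (by norm_num) h5
      have h3 : (2 : ℤ) ∣ j := by
        rw [hj2]
        exact Dvd.dvd.mul_right (dvd_pow_self 2 (by omega)) c
      obtain ⟨i, rfl⟩ := h3
      refine Subgroup.mem_zpowers_iff.mpr ⟨i, ?_⟩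
      rw [hpow2, hj]
    · obtain ⟨j, hj⟩ := Subgroup.mem_zpowers_iff.mp h
      refine Or.inr ?_
      have hg' : g = s * r ^ j := by
        rw [hj, hmul]
      have h1 : r ^ ((M : ℤ) * j + j) = 1 := by
        have h0 : s * r ^ j * (s * r ^ j) = 1 := by
          rw [← hg', ← pow_two]; exact hg2
        rwa [← mul_assoc, hconjz j, ← zpow_add] at h0
      have hMj : (M : ℤ) * j + j = 2 ^ (k + 2) * j := by linear_combination j * hM1
      rw [hMj] at h1
      obtain ⟨c, hc⟩ := hdvd_ord _ h1
      have h3 : (2 : ℤ) ∣ j := by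
        refine ⟨c, ?_⟩
        have h5 : (2 : ℤ) ^ (k + 2) * j = 2 ^ (k + 2) * (2 * c) := by rw [hc]; ring
        exact mul_left_cancel₀ (by positivity) h5
      obtain ⟨i, rfl⟩ := h3
      refine Subgroup.mem_zpowers_iff.mpr ⟨i, ?_⟩
      rw [hpow2, hj]
  -- r is not in E
  have hrE : r ∉ E := by
    intro hrE
    rcases mem_cosetUnion.mp hrE with h | h
    · obtain ⟨j, hj⟩ := Subgroup.mem_zpowers_iff.mp h
      have hj2 : r ^ (2 * j) = r := by rw [← hpow2, hj]
      have h1 : r ^ (2 * j - 1) = 1 := by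
        rw [sub_eq_add_neg, zpow_add, hj2]
        simp
      obtain ⟨c, hc⟩ := hdvd_ord _ h1
      have h3 : (2 : ℤ) ∣ 2 * j - 1 := by
        rw [hc]
        exact Dvd.dvd.mul_right (dvd_pow_self 2 (by omega)) c
      omega
    · obtain ⟨j, hj⟩ := Subgroup.mem_zpowers_iff.mp h
      apply hsC
      have hseq : s = (r ^ 2 : G) ^ j * r⁻¹ := by
        rw [hj, mul_assoc, mul_inv_cancel, mul_one]
      rw [hseq]
      exact mul_mem (zpow_mem (pow_mem (Subgroup.mem_zpowers r) 2) j)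
        (inv_mem (Subgroup.mem_zpowers r))
  have hHtop : H ≠ ⊤ := by
    intro h
    exact hrE (hsubE (h ▸ Subgroup.mem_top r))
  -- H is characteristic
  have hchar : H.Characteristic := by
    rw [Subgroup.characteristic_iff_map_eq]
    intro φ
    rw [hH, MonoidHom.map_closure]
    congr 1
    ext g
    simp only [Set.mem_image, hS, Set.mem_setOf_eq]
    constructor
    · rintro ⟨x, hx, rfl⟩
      rw [← map_pow]
      simp [hx]
    · intro hg
      refine ⟨φ.symm g, ?_, φ.apply_symm_apply g⟩
      have h0 : φ.symm (g ^ 2) = φ.symm 1 := by rw [hg]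
      rwa [map_pow, map_one] at h0
  -- z = r^(2^(k+2)) is an involution distinct from s; both are in H
  set z : G := r ^ (2 ^ (k + 2)) with hz
  have hz2 : z ^ 2 = 1 := by
    rw [hz, ← pow_mul, show 2 ^ (k + 2) * 2 = 2 ^ (k + 3) from by ring, hr]
  have hzH : z ∈ H := Subgroup.subset_closure hz2
  have hsH : s ∈ H := Subgroup.subset_closure hs
  have hz1 : z ≠ 1 := by
    intro h
    have hp : r ^ (2 ^ (k + 2)) = 1 := by rw [← hz]; exact h
    have hd := orderOf_dvd_of_pow_eq_one hp
    rw [hord] at hd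
    have h1 := Nat.le_of_dvd (by positivity) hd
    have : (2 : ℕ) ^ (k + 2) < 2 ^ (k + 3) := Nat.pow_lt_pow_right (by norm_num) (by omega)
    omega
  have hs1 : s ≠ 1 := fun h => hsC (h ▸ one_mem C)
  have hsz : s ≠ z := by
    intro h
    exact hsC (by rw [h, hz]; exact pow_mem (Subgroup.mem_zpowers r) _)
  -- H is not cyclic: it contains three solutions of x² = 1
  have hHnc : ¬ IsCyclic H := by
    intro hcyc
    letI : Fintype ↥H := Fintype.ofFinite _
    have hle2 := hcyc.card_pow_eq_one_le (n := 2) (by norm_num)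
    have hmem : ∀ x : ↥H, (x : G) ^ 2 = 1 →
        x ∈ Finset.filter (fun a : ↥H => a ^ 2 = 1) Finset.univ := by
      intro x hx
      simp only [Finset.mem_filter, Finset.mem_univ, true_and]
      ext
      push_cast
      exact hx
    have hne12 : ((1 : ↥H)) ≠ ⟨s, hsH⟩ := fun h => hs1 (congrArg Subtype.val h).symm
    have hne13 : ((1 : ↥H)) ≠ ⟨z, hzH⟩ := fun h => hz1 (congrArg Subtype.val h).symm
    have hne23 : (⟨s, hsH⟩ : ↥H) ≠ ⟨z, hzH⟩ := fun h => hsz (congrArg Subtype.val h)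
    have hsubset : ({(1 : ↥H), ⟨s, hsH⟩, ⟨z, hzH⟩} : Finset ↥H) ⊆
        Finset.filter (fun a : ↥H => a ^ 2 = 1) Finset.univ := by
      intro x hx
      simp only [Finset.mem_insert, Finset.mem_singleton] at hx
      rcases hx with rfl | rfl | rfl
      · exact hmem _ (by simp)
      · exact hmem _ hs
      · exact hmem _ hz2
    have hcard3 : ({(1 : ↥H), ⟨s, hsH⟩, ⟨z, hzH⟩} : Finset ↥H).card = 3 := by
      rw [Finset.card_insert_of_notMem (by simp [hne12, hne13]),
        Finset.card_insert_of_notMem (by simp [hne23]), Finset.card_singleton]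
    have := Finset.card_le_card hsubset
    omega
  exact ⟨fun hccs => hHnc (hccs.2.2 H hchar hHtop), H, hchar, hHtop, hHnc⟩
end

section
/- Let G be a finite nilpotent CCS group. Then G is a non-abelian p-group for some prime p. -/
theorem LinearEquiv.exists_apply_eq_of_ne_zero {K V : Type*} [DivisionRing K] [AddCommGroup V]
    [Module K V] {x y : V} (hx : x ≠ 0) (hy : y ≠ 0) : ∃ g : V ≃ₗ[K] V, g x = y := by
  let f := (coord K V x hx).trans (toSpanNonzeroSingleton K V y hy)
  obtain ⟨g, hg⟩ := Submodule.exists_linearEquiv_restrict_eq f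
  refine ⟨g, ?_⟩
  simpa [f, coord_self] using (hg ⟨x, Submodule.mem_span_singleton_self x⟩).symm

namespace Subgroup

variable {G : Type*} [Group G]

theorem Characteristic.eq_bot_or_eq_top_of_forall_exists_mulEquiv {N : Subgroup G}
    (hN : N.Characteristic)
    (htrans : ∀ x y : G, x ≠ 1 → y ≠ 1 → ∃ φ : G ≃* G, φ x = y) : N = ⊥ ∨ N = ⊤ := by
  refine N.bot_or_exists_ne_one.imp_right fun ⟨x, hxN, hx⟩ => (eq_top_iff' N).mpr fun y => ?_
  rcases eq_or_ne y 1 with rfl | hy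
  · exact N.one_mem
  obtain ⟨φ, rfl⟩ := htrans x y hx hy
  rw [← characteristic_iff_map_eq.mp hN φ]
  exact mem_map_of_mem _ hxN

end Subgroup

theorem CommGroup.exists_mulEquiv_apply_eq_of_pow_prime_eq_one {G : Type*} [CommGroup G]
    {p : ℕ} [Fact p.Prime] (hG : ∀ g : G, g ^ p = 1) {x y : G} (hx : x ≠ 1) (hy : y ≠ 1) :
    ∃ φ : G ≃* G, φ x = y := by
  let _ : Module (ZMod p) (Additive G) :=
    AddCommGroup.zmodModule fun g => congrArg Additive.ofMul (hG g.toMul)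
  obtain ⟨g, hg⟩ := LinearEquiv.exists_apply_eq_of_ne_zero (K := ZMod p)
    (x := Additive.ofMul x) (y := Additive.ofMul y) hx hy
  exact ⟨MulEquiv.toAdditive.symm g.toAddEquiv, hg⟩


section PowMonoidHom

variable {G : Type*} [CommGroup G]

instance (n : ℕ) : (powMonoidHom n : G →* G).ker.Characteristic :=
  Subgroup.characteristic_iff_map_le.mpr fun φ _ ⟨g, hg, hφg⟩ => by
    simp_all [← hφg, ← map_pow]

instance (n : ℕ) : (powMonoidHom n : G →* G).range.Characteristic :=
  Subgroup.characteristic_iff_map_le.mpr fun φ _ ⟨_, ⟨g, rfl⟩, hφg⟩ =>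
    ⟨φ g, by simp [← hφg, map_pow]⟩

variable [Finite G] {p : ℕ} [Fact p.Prime]

theorem IsPGroup.range_powMonoidHom_ne_top [Nontrivial G] (hG : IsPGroup p G) :
    (powMonoidHom p : G →* G).range ≠ ⊤ := by
  intro htop
  have hinj : Function.Injective (powMonoidHom p : G →* G) :=
    Finite.injective_iff_surjective.mpr (MonoidHom.range_eq_top.mp htop)
  obtain ⟨g, hg⟩ := exists_prime_orderOf_dvd_card' p
    ((hG.card_eq_or_dvd).resolve_left Finite.one_lt_card.ne')
  have : g = 1 := hinj (by simp [← hg, pow_orderOf_eq_one])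
  exact (Fact.out : p.Prime).one_lt.ne' (by simp [← hg, this])

theorem IsPGroup.isCyclic_of_isCyclic_ker_of_isCyclic_range (hG : IsPGroup p G)
    (hker : IsCyclic (powMonoidHom p : G →* G).ker)
    (hrange : IsCyclic (powMonoidHom p : G →* G).range) : IsCyclic G := by
  set f : G →* G := powMonoidHom p
  have hp : p.Prime := Fact.out
  rcases eq_or_ne f.range ⊥ with hbot | hne
  · refine isCyclic_of_surjective f.ker.subtype fun g => ⟨⟨g, ?_⟩, rfl⟩
    exact Subgroup.mem_bot.mp (hbot ▸ MonoidHom.mem_range.mpr ⟨g, rfl⟩)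
  have hker_le : Nat.card f.ker ≤ p := by
    rw [← IsCyclic.exponent_eq_card]
    exact Nat.le_of_dvd hp.pos (Monoid.exponent_dvd_of_forall_pow_eq_one fun x => Subtype.ext x.2)
  obtain ⟨⟨_, g, rfl⟩, hgen⟩ := hrange.exists_generator
  have hrange_card : Nat.card f.range = orderOf (g ^ p) := by
    rw [← orderOf_eq_card_of_forall_mem_zpowers hgen, ← Subgroup.orderOf_coe]; rfl
  have hg : g ≠ 1 := by
    rintro rfl
    exact hne (Subgroup.card_eq_one.mp (by simpa using hrange_card))
  have hp_dvd : p ∣ orderOf g := by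
    obtain ⟨k, hk⟩ := IsPGroup.iff_orderOf.mp hG g
    rcases k with _ | k
    · exact absurd (orderOf_eq_one_iff.mp (by simpa using hk)) hg
    · exact hk ▸ dvd_pow_self p k.succ_ne_zero
  have horder : orderOf g = p * orderOf (g ^ p) := by
    rw [orderOf_pow_of_dvd hp.ne_zero hp_dvd, Nat.mul_div_cancel' hp_dvd]
  refine isCyclic_of_orderOf_eq_card g (le_antisymm orderOf_le_card ?_)
  calc Nat.card G = Nat.card f.ker * Nat.card f.range := by
        rw [← Subgroup.index_ker, Subgroup.card_mul_index]
    _ ≤ p * orderOf (g ^ p) := hrange_card ▸ Nat.mul_le_mul_right _ hker_le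
    _ = orderOf g := horder.symm

theorem IsPGroup.eq_bot_or_eq_top_of_characteristic (hG : IsPGroup p G) (hnc : ¬IsCyclic G)
    (hcyc : ∀ N : Subgroup G, N.Characteristic → N ≠ ⊤ → IsCyclic N)
    {N : Subgroup G} (hN : N.Characteristic) : N = ⊥ ∨ N = ⊤ := by
  by_cases hΩ : (powMonoidHom p : G →* G).ker = ⊤
  · refine hN.eq_bot_or_eq_top_of_forall_exists_mulEquiv fun x y hx hy =>
      CommGroup.exists_mulEquiv_apply_eq_of_pow_prime_eq_one (p := p) (fun g => ?_) hx hy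
    exact (Subgroup.eq_top_iff' _).mp hΩ g
  have : Nontrivial G := not_subsingleton_iff_nontrivial.mp fun _ => hnc isCyclic_of_subsingleton
  exact absurd (hG.isCyclic_of_isCyclic_ker_of_isCyclic_range (hcyc _ inferInstance hΩ)
    (hcyc _ inferInstance hG.range_powMonoidHom_ne_top)) hnc

end PowMonoidHom

theorem Group.IsNilpotent.exists_isPGroup_of_forall_characteristic_isCyclic {G : Type*} [Group G]
    [Finite G] [Group.IsNilpotent G] (hnc : ¬IsCyclic G)
    (hcyc : ∀ N : Subgroup G, N.Characteristic → N ≠ ⊤ → IsCyclic N) :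
    ∃ p : ℕ, p.Prime ∧ IsPGroup p G := by
  by_contra! hpG
  have : IsZGroup G := ⟨fun p hp P => by
    have := Fact.mk hp
    refine hcyc P (P.characteristic_of_normal inferInstance) fun htop => hpG p hp ?_
    exact (htop ▸ P.isPGroup').of_equiv Subgroup.topEquiv⟩
  exact hnc inferInstance

/-- A finite nilpotent CCS group is a non-abelian `p`-group for some prime `p`. -/
theorem nilpotent_CCS_is_nonabelian_pGroup
    (G : Type*) [Group G] [Finite G] (hnil : Group.IsNilpotent G) (hccs : IsCCS G) :
    (∃ p : ℕ, p.Prime ∧ IsPGroup p G) ∧ ∃ a b : G, a * b ≠ b * a := by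
  obtain ⟨hnc, ⟨N, hNchar, hNbot, hNtop⟩, hcyc⟩ := hccs
  obtain ⟨p, hp, hG⟩ := hnil.exists_isPGroup_of_forall_characteristic_isCyclic hnc hcyc
  refine ⟨⟨p, hp, hG⟩, ?_⟩
  by_contra! hcomm
  let _ : CommGroup G := { mul_comm := hcomm }
  have := Fact.mk hp
  exact (hG.eq_bot_or_eq_top_of_characteristic hnc hcyc hNchar).elim hNbot hNtop
end

section
/- For every integer n ≥ 3, the dihedral group of order 2n is a CCS group: it is not cyclic, it has a nontrivial proper characteristic subgroup, and every proper characteristic subgroup is cyclic. -/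
namespace DihedralCCS

open DihedralGroup

variable {n : ℕ}

/-- The automorphism of the dihedral group fixing rotations and shifting reflections. -/
def shiftAut (a : ZMod n) : DihedralGroup n ≃* DihedralGroup n where
  toFun x := match x with
    | r i => r i
    | sr i => sr (i + a)
  invFun x := match x with
    | r i => r i
    | sr i => sr (i - a)
  left_inv x := by cases x <;> simp
  right_inv x := by cases x <;> simp
  map_mul' x y := by
    cases x <;> cases y <;>
      simp only [r_mul_r, r_mul_sr, sr_mul_r, sr_mul_sr] <;> (congr 1; ring)

/-- The rotation subgroup. -/
def RotSub (n : ℕ) : Subgroup (DihedralGroup n) where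
  carrier := {x | ∃ i, x = r i}
  one_mem' := ⟨0, rfl⟩
  mul_mem' := by rintro _ _ ⟨i, rfl⟩ ⟨j, rfl⟩; exact ⟨i + j, rfl⟩
  inv_mem' := by rintro _ ⟨i, rfl⟩; exact ⟨-i, rfl⟩

theorem r_mem (i : ZMod n) : r i ∈ RotSub n := ⟨i, rfl⟩

theorem sr_not_mem (i : ZMod n) : sr i ∉ RotSub n := by
  rintro ⟨j, h⟩; exact absurd h (by simp)

theorem r_eq_pow [NeZero n] (i : ZMod n) : r i = (r 1 : DihedralGroup n) ^ i.val := by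
  rw [r_one_pow, ZMod.natCast_val, ZMod.cast_id]

instance rot_cyclic [NeZero n] : IsCyclic (RotSub n) := by
  refine ⟨⟨r 1, r_mem 1⟩, ?_⟩
  rintro ⟨x, i, rfl⟩
  refine ⟨(i.val : ℤ), ?_⟩
  ext
  push_cast
  rw [zpow_natCast]
  exact (r_eq_pow i).symm

theorem rot_char [NeZero n] (hn : n ≠ 2) : (RotSub n).Characteristic := by
  refine Subgroup.characteristic_iff_le_comap.mpr fun φ => ?_
  have key : φ (r 1) ∈ RotSub n := by
    rcases h : φ (r 1) with j | j
    · exact r_mem j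
    · exfalso
      have h1 : orderOf (φ (r 1)) = orderOf (r 1 : DihedralGroup n) :=
        orderOf_injective φ.toMonoidHom φ.injective _
      rw [h, orderOf_sr, orderOf_r_one] at h1
      exact hn h1.symm
  rintro _ ⟨i, rfl⟩
  have : φ (r i) = φ (r 1) ^ i.val := by rw [r_eq_pow i, map_pow]
  simpa [Subgroup.mem_comap, this] using pow_mem key i.val

end DihedralCCS

/-- For every `n ≥ 3`, the dihedral group of order `2n` is a CCS group. -/
theorem dihedral_is_CCS (n : ℕ) (hn : 3 ≤ n) : IsCCS (DihedralGroup n) := by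
  haveI : NeZero n := ⟨by omega⟩
  open DihedralGroup DihedralCCS in
  have hdvd : ∀ m : ℕ, ((m : ZMod n) = 0) → n ∣ m := fun m h =>
    (ZMod.natCast_eq_zero_iff m n).mp h
  refine ⟨?_, ⟨DihedralCCS.RotSub n, DihedralCCS.rot_char (by omega), ?_, ?_⟩, ?_⟩
  · intro h
    letI := h.commGroup
    have h2 := mul_comm (DihedralGroup.r (1 : ZMod n)) (DihedralGroup.sr 0)
    simp only [DihedralGroup.r_mul_sr, DihedralGroup.sr_mul_r, DihedralGroup.sr.injEq] at h2
    have h3 : ((2 : ℕ) : ZMod n) = 0 := by push_cast; linear_combination -h2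
    have := Nat.le_of_dvd (by norm_num) (hdvd 2 h3)
    omega
  · intro h
    have h1 : DihedralGroup.r (1 : ZMod n) ∈ DihedralCCS.RotSub n := DihedralCCS.r_mem 1
    rw [h, Subgroup.mem_bot, DihedralGroup.one_def, DihedralGroup.r.injEq] at h1
    have h3 : ((1 : ℕ) : ZMod n) = 0 := by exact_mod_cast h1
    have := Nat.le_of_dvd (by norm_num) (hdvd 1 h3)
    omega
  · intro h
    exact DihedralCCS.sr_not_mem (0 : ZMod n) (h ▸ Subgroup.mem_top _)
  · intro N hN hNtop
    have hle : N ≤ DihedralCCS.RotSub n := by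
      intro x hx
      rcases x with i | i
      · exact DihedralCCS.r_mem i
      · exfalso
        apply hNtop
        have hsr : ∀ j : ZMod n, DihedralGroup.sr j ∈ N := by
          intro j
          have hc := Subgroup.characteristic_iff_le_comap.mp hN (DihedralCCS.shiftAut (j - i))
          have := hc hx
          rw [Subgroup.mem_comap] at this
          have heq : (DihedralCCS.shiftAut (j - i)) (DihedralGroup.sr i)
              = DihedralGroup.sr j := by
            show DihedralGroup.sr (i + (j - i)) = DihedralGroup.sr j
            congr 1; ring
          simpa only [MulEquiv.coe_toMonoidHom, heq] using this
        rw [eq_top_iff]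
        rintro (k | k) -
        · have := mul_mem (hsr i) (hsr (i + k))
          simpa using this
        · exact hsr k
    haveI := DihedralCCS.rot_cyclic (n := n)
    exact Subgroup.isCyclic_of_le hle
end

section
/- For every integer n ≥ 2, the dicyclic group of order 4n (given by the presentation ⟨a, b | a^{2n} = 1, b² = a^n, b a b⁻¹ = a⁻¹⟩) is a CCS group: it is not cyclic, it has a nontrivial proper characteristic subgroup, and every proper characteristic subgroup is cyclic. -/
namespace DicyclicCCS

open QuaternionGroup Subgroup

variable {n : ℕ}

/-- The automorphism `a i ↦ a i`, `xa i ↦ xa (i + 1)`. -/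
def shift (n : ℕ) : QuaternionGroup n ≃* QuaternionGroup n where
  toFun g := match g with
    | .a i => .a i
    | .xa i => .xa (i + 1)
  invFun g := match g with
    | .a i => .a i
    | .xa i => .xa (i - 1)
  left_inv := by rintro (i | i) <;> simp
  right_inv := by rintro (i | i) <;> simp
  map_mul' := by
    rintro (i | i) (j | j) <;>
      simp only [a_mul_a, a_mul_xa, xa_mul_a, xa_mul_xa] <;> congr 1 <;> ring

lemma shift_xa (i : ZMod (2 * n)) : shift n (QuaternionGroup.xa i) = .xa (i + 1) := rfl

lemma isCyclic_of_le_zpowers {G : Type*} [Group G] {g : G} {N : Subgroup G}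
    (h : N ≤ Subgroup.zpowers g) : IsCyclic N := by
  have : IsCyclic (Subgroup.zpowers g) := by
    refine ⟨⟨g, Subgroup.mem_zpowers g⟩, ?_⟩
    rintro ⟨x, k, rfl⟩
    exact ⟨k, Subtype.ext (by simp)⟩
  exact isCyclic_of_surjective (Subgroup.subgroupOfEquivOfLe h).toMonoidHom
    (Subgroup.subgroupOfEquivOfLe h).surjective

lemma a_mem_zpowers [NeZero n] (i : ZMod (2 * n)) :
    (QuaternionGroup.a i : QuaternionGroup n) ∈ Subgroup.zpowers (QuaternionGroup.a 1) := by
  refine ⟨(i.val : ℤ), ?_⟩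
  show (QuaternionGroup.a 1 : QuaternionGroup n) ^ (i.val : ℤ) = _
  rw [zpow_natCast, a_one_pow]
  congr 1
  haveI : NeZero (2 * n) := ⟨by have := NeZero.ne n; omega⟩
  rw [ZMod.natCast_val, ZMod.cast_id]

lemma char_le_zpowers [NeZero n] (N : Subgroup (QuaternionGroup n))
    (hc : N.Characteristic) (ht : N ≠ ⊤) :
    N ≤ Subgroup.zpowers (QuaternionGroup.a 1) := by
  -- first: N contains no xa
  by_cases hxa : ∃ i, QuaternionGroup.xa i ∈ N
  · exfalso
    obtain ⟨i, hi⟩ := hxa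
    -- all xa's are in N
    have hall : ∀ k : ℕ, QuaternionGroup.xa (i + (k : ZMod (2 * n))) ∈ N := by
      intro k
      induction k with
      | zero => simpa using hi
      | succ k ih =>
        have := (Subgroup.characteristic_iff_le_comap.mp hc (shift n)) ih
        rw [Subgroup.mem_comap] at this
        simp only [MulEquiv.coe_toMonoidHom, shift_xa] at this
        convert this using 2
        push_cast
        ring
    have hallxa : ∀ j : ZMod (2 * n), QuaternionGroup.xa j ∈ N := by
      intro j
      have := hall (j - i).val
      rwa [ZMod.natCast_val, ZMod.cast_id, add_sub_cancel] at this
    have halla : ∀ j : ZMod (2 * n), QuaternionGroup.a j ∈ N := by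
      intro j
      have h2 := N.mul_mem (N.inv_mem (hallxa 0)) (hallxa j)
      have : (QuaternionGroup.xa 0 : QuaternionGroup n)⁻¹ *
          QuaternionGroup.xa j = QuaternionGroup.a j := by
        show QuaternionGroup.xa ((n : ZMod (2 * n)) + 0) * _ = _
        rw [xa_mul_xa]
        congr 1
        ring
      rwa [this] at h2
    apply ht
    rw [Subgroup.eq_top_iff']
    rintro (j | j)
    · exact halla j
    · exact hallxa j
  · push_neg at hxa
    intro g hg
    match g with
    | .a i => exact a_mem_zpowers i
    | .xa i => exact absurd hg (hxa i)

lemma a_n_ne_one (hn : 2 ≤ n) : (QuaternionGroup.a (n : ZMod (2 * n)) : QuaternionGroup n) ≠ 1 := by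
  rw [one_def]
  intro h
  have : (n : ZMod (2 * n)) = 0 := by injection h
  have := Nat.le_of_dvd (by omega) ((ZMod.natCast_eq_zero_iff n (2 * n)).mp this)
  omega

lemma a_n_mem_center :
    (QuaternionGroup.a (n : ZMod (2 * n)) : QuaternionGroup n) ∈ Subgroup.center _ := by
  rw [Subgroup.mem_center_iff]
  have h2n : ((2 * n : ℕ) : ZMod (2 * n)) = 0 := ZMod.natCast_self _
  rintro (j | j)
  · simp [add_comm]
  · rw [xa_mul_a, a_mul_xa]
    congr 1
    have : ((n : ZMod (2 * n)) + n) = 0 := by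
      rw [← h2n]; push_cast; ring
    linear_combination this

lemma not_comm (hn : 2 ≤ n) : ¬ ∀ x y : QuaternionGroup n, x * y = y * x := by
  intro h
  have hc := h (QuaternionGroup.a 1) (QuaternionGroup.xa 0)
  rw [a_mul_xa, xa_mul_a] at hc
  have h1 : (0 : ZMod (2 * n)) - 1 = 0 + 1 := by injection hc
  rw [zero_sub, zero_add] at h1
  have : ((2 : ℕ) : ZMod (2 * n)) = 0 := by
    push_cast
    linear_combination -h1
  have := Nat.le_of_dvd (by omega) ((ZMod.natCast_eq_zero_iff 2 (2 * n)).mp this)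
  omega

lemma not_cyclic (hn : 2 ≤ n) : ¬ IsCyclic (QuaternionGroup n) := by
  intro h
  letI : CommGroup (QuaternionGroup n) := IsCyclic.commGroup
  exact not_comm hn fun x y => mul_comm x y

end DicyclicCCS

/-- For every `n ≥ 2`, the dicyclic group of order `4n` is a CCS group. -/
theorem dicyclic_is_CCS (n : ℕ) (hn : 2 ≤ n) : IsCCS (QuaternionGroup n) := by
  haveI : NeZero n := ⟨by omega⟩
  refine ⟨DicyclicCCS.not_cyclic hn, ⟨Subgroup.center _, inferInstance, ?_, ?_⟩, ?_⟩
  · intro h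
    exact DicyclicCCS.a_n_ne_one hn (Subgroup.mem_bot.mp (h ▸ DicyclicCCS.a_n_mem_center))
  · intro h
    refine DicyclicCCS.not_comm hn fun x y => ?_
    exact ((Subgroup.mem_center_iff.mp (h ▸ Subgroup.mem_top x)) y).symm
  · intro N hc ht
    exact DicyclicCCS.isCyclic_of_le_zpowers (DicyclicCCS.char_le_zpowers N hc ht)
end

section
/- Let p be a prime, α ≥ 1 an integer, and m > 1 an integer with gcd(m, p) = 1 and p < q for every prime q dividing m. Let k be an integer with gcd(m, k) = 1, k ≢ 1 (mod m), and k^{p^α} ≡ 1 (mod m). Let G be the group with presentation ⟨x, y | x^m = y^{p^α} = 1, y x y⁻¹ = x^k⟩ (realizable as the semidirect product (ℤ/mℤ) ⋊ (ℤ/p^αℤ), where the generator of ℤ/p^αℤ acts by multiplication by k). Then G is a CCS group if and only if gcd(m, k − 1) = 1 and k^p ≡ 1 (mod m). -/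
open Subgroup

theorem Subgroup.characteristic_closure_setOf_pow_eq_one {G : Type*} [Group G] (n : ℕ) :
    (closure {g : G | g ^ n = 1}).Characteristic := by
  refine characteristic_iff_map_le.mpr fun φ => ?_
  rw [MonoidHom.map_closure, closure_le]
  rintro _ ⟨g, hg, rfl⟩
  exact subset_closure (show φ g ^ n = 1 by rw [← map_pow, show g ^ n = 1 from hg, map_one])

theorem Commute.mem_zpowers_mul_of_coprime {G : Type*} [Group G] {u v : G} (h : Commute u v)
    (hc : (orderOf u).Coprime (orderOf v)) : u ∈ zpowers (u * v) := by
  have hpow : (u * v) ^ orderOf v = u ^ orderOf v := by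
    rw [h.mul_pow, pow_orderOf_eq_one, mul_one]
  have hu : u ∈ zpowers (u ^ orderOf v) := mem_zpowers_pow_iff.mpr hc.symm
  exact zpowers_le.mpr (hpow ▸ pow_mem (mem_zpowers _) _) hu

theorem Commute.isCyclic_closure_pair {G : Type*} [Group G] {u v : G} (h : Commute u v)
    (hc : (orderOf u).Coprime (orderOf v)) : IsCyclic (closure {u, v}) := by
  have hle : closure {u, v} ≤ zpowers (u * v) := by
    rw [closure_le, Set.insert_subset_iff, Set.singleton_subset_iff]
    exact ⟨h.mem_zpowers_mul_of_coprime hc, h.eq ▸ h.symm.mem_zpowers_mul_of_coprime hc.symm⟩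
  exact isCyclic_of_le hle

theorem Subgroup.commute_of_isCyclic {G : Type*} [Group G] {H : Subgroup G} [IsCyclic H]
    {a b : G} (ha : a ∈ H) (hb : b ∈ H) : Commute a b :=
  setLike_mul_comm ha hb

theorem dvd_sub_one_of_dvd_sq {R : Type*} [CommRing R] {m k : R} {n : ℕ}
    (hmn : IsCoprime m n) (hpow : m ∣ k ^ n - 1) (hsq : m ∣ (k - 1) ^ 2) : m ∣ k - 1 := by
  have hbin := sq_dvd_add_pow_sub_sub (k - 1) 1 n
  have hlin : (k - 1) * n =
      (k ^ n - 1) - ((1 + (k - 1)) ^ n - 1 ^ (n - 1) * (k - 1) * n - 1 ^ n) := by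
    ring
  exact hmn.dvd_of_dvd_mul_right (hlin ▸ dvd_sub hpow (hsq.trans hbin))

theorem IsCoprime.pow_sub_one {R : Type*} [CommRing R] {k m : R} {p b : ℕ}
    (hk : IsCoprime (k - 1) m) (hkp : m ∣ k ^ p - 1) (hbp : b.Coprime p) (hp : 1 < p) :
    IsCoprime (k ^ b - 1) m := by
  obtain ⟨s, -, hs⟩ := Nat.exists_mul_mod_eq_one_of_coprime hbp hp
  obtain ⟨z, hz⟩ : m ∣ (k ^ p) ^ (b * s / p) - 1 :=
    hkp.trans (by simpa using sub_dvd_pow_sub_pow (k ^ p) 1 (b * s / p))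
  have hexp : k ^ (b * s) - 1 = k - 1 + m * (k * z) := by
    conv_lhs => rw [← Nat.div_add_mod (b * s) p, hs, pow_succ, pow_mul]
    linear_combination k * hz
  have hcop : IsCoprime (k ^ (b * s) - 1) m := hexp ▸ hk.add_mul_left_left (k * z)
  exact hcop.of_isCoprime_of_dvd_left (by simpa [pow_mul] using sub_dvd_pow_sub_pow (k ^ b) 1 s)

section Relation

variable {G : Type*} [Group G] {x y : G} {k : ℤ}

theorem pow_mul_zpow_of_conj (hconj : y * x * y⁻¹ = x ^ k) (b : ℕ) (a : ℤ) :
    y ^ b * x ^ a = x ^ (a * k ^ b) * y ^ b := by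
  have hstep : ∀ c : ℤ, y * x ^ c = x ^ (c * k) * y := fun c => by
    rw [← mul_inv_eq_iff_eq_mul, ← conj_zpow, hconj, ← zpow_mul, mul_comm]
  induction b with
  | zero => simp
  | succ b ih =>
    rw [pow_succ', mul_assoc, ih, ← mul_assoc, hstep, mul_assoc, pow_succ, mul_assoc]

theorem zpow_mul_pow_mul_zpow_mul_pow (hconj : y * x * y⁻¹ = x ^ k) (a c : ℤ) (b e : ℕ) :
    x ^ a * y ^ b * (x ^ c * y ^ e) = x ^ (a + c * k ^ b) * y ^ (b + e) := by
  rw [mul_assoc, ← mul_assoc (y ^ b), pow_mul_zpow_of_conj hconj, zpow_add, pow_add]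
  simp only [mul_assoc]

theorem zpow_mul_pow_pow (hconj : y * x * y⁻¹ = x ^ k) (a : ℤ) (b N : ℕ) :
    (x ^ a * y ^ b) ^ N = x ^ (a * ∑ i ∈ Finset.range N, k ^ (b * i)) * y ^ (b * N) := by
  induction N with
  | zero => simp
  | succ N ih =>
    rw [pow_succ, ih, zpow_mul_pow_mul_zpow_mul_pow hconj, Finset.sum_range_succ]
    congr 2
    ring

theorem exists_eq_zpow_mul_pow_of_mem_closure [Finite G] (hconj : y * x * y⁻¹ = x ^ k)
    {d : ℤ} {e : ℕ} {g : G} (hg : g ∈ closure {x ^ d, y ^ e}) :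
    ∃ (a : ℤ) (b : ℕ), g = x ^ (d * a) * y ^ (e * b) := by
  rw [← mem_toSubmonoid, closure_toSubmonoid_of_finite] at hg
  induction hg using Submonoid.closure_induction with
  | mem g hg =>
    rcases hg with rfl | rfl
    exacts [⟨1, 0, by simp⟩, ⟨0, 1, by simp⟩]
  | one => exact ⟨0, 0, by simp⟩
  | mul g g' _ _ ih ih' =>
    obtain ⟨a, b, rfl⟩ := ih
    obtain ⟨c, b', rfl⟩ := ih'
    refine ⟨a + c * k ^ (e * b), b + b', ?_⟩
    rw [zpow_mul_pow_mul_zpow_mul_pow hconj]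
    congr 2 <;> ring

end Relation

/-- `card_eq` makes `G` the full semidirect product `ℤ/m ⋊ ℤ/n` rather than a proper quotient of
it. -/
structure IsSplitMetacyclic {G : Type*} [Group G] (x y : G) (m n : ℕ) (k : ℤ) : Prop where
  closure_eq_top : closure {x, y} = ⊤
  pow_left : x ^ m = 1
  pow_right : y ^ n = 1
  conj_eq : y * x * y⁻¹ = x ^ k
  card_eq : Nat.card G = m * n

namespace IsSplitMetacyclic

variable {G : Type*} [Group G] [Finite G] {x y : G} {m n : ℕ} {k : ℤ}

theorem exists_eq_zpow_mul_pow (h : IsSplitMetacyclic x y m n k) (g : G) :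
    ∃ (a : ℤ) (b : ℕ), g = x ^ a * y ^ b := by
  have hg : g ∈ closure {x ^ (1 : ℤ), y ^ 1} := by simp [h.closure_eq_top]
  simpa using exists_eq_zpow_mul_pow_of_mem_closure h.conj_eq hg

theorem mul_surjective (h : IsSplitMetacyclic x y m n k) :
    Function.Surjective fun u : zpowers x × zpowers y => (u.1 : G) * u.2 := by
  intro g
  obtain ⟨a, b, rfl⟩ := h.exists_eq_zpow_mul_pow g
  exact ⟨(⟨x ^ a, zpow_mem_zpowers x a⟩, ⟨y ^ b, pow_mem (mem_zpowers y) b⟩), rfl⟩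

theorem orderOf_eq (h : IsSplitMetacyclic x y m n k) : orderOf x = m ∧ orderOf y = n := by
  have hle : m * n ≤ orderOf x * orderOf y := by
    rw [← h.card_eq, ← Nat.card_zpowers x, ← Nat.card_zpowers y, ← Nat.card_prod]
    exact Nat.card_le_card_of_surjective _ h.mul_surjective
  have hpos : 0 < m * n := h.card_eq ▸ Nat.card_pos
  have hx := Nat.le_of_dvd (Nat.pos_of_mul_pos_right hpos) (orderOf_dvd_of_pow_eq_one h.pow_left)
  have hy := Nat.le_of_dvd (Nat.pos_of_mul_pos_left hpos) (orderOf_dvd_of_pow_eq_one h.pow_right)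
  have hx0 := orderOf_pos x
  have hy0 := orderOf_pos y
  constructor <;> nlinarith

theorem mul_injective (h : IsSplitMetacyclic x y m n k) :
    Function.Injective fun u : zpowers x × zpowers y => (u.1 : G) * u.2 := by
  refine (h.mul_surjective.bijective_of_nat_card_le ?_).1
  rw [Nat.card_prod, Nat.card_zpowers, Nat.card_zpowers, h.orderOf_eq.1, h.orderOf_eq.2,
    h.card_eq]

theorem eq_and_eq_of_mul_eq_mul (h : IsSplitMetacyclic x y m n k) {u u' v v' : G}
    (hu : u ∈ zpowers x) (hu' : u' ∈ zpowers x) (hv : v ∈ zpowers y) (hv' : v' ∈ zpowers y)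
    (he : u * v = u' * v') : u = u' ∧ v = v' := by
  simpa [Prod.ext_iff] using
    h.mul_injective (a₁ := (⟨u, hu⟩, ⟨v, hv⟩)) (a₂ := (⟨u', hu'⟩, ⟨v', hv'⟩)) he

theorem eq_one_of_zpow_mul_pow_pow_eq_one (h : IsSplitMetacyclic x y m n k) {a : ℤ} {b N : ℕ}
    (hg : (x ^ a * y ^ b) ^ N = 1) :
    x ^ (a * ∑ i ∈ Finset.range N, k ^ (b * i)) = 1 ∧ y ^ (b * N) = 1 := by
  rw [zpow_mul_pow_pow h.conj_eq, ← mul_one 1] at hg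
  exact h.eq_and_eq_of_mul_eq_mul (zpow_mem_zpowers x _) (one_mem _)
    (pow_mem (mem_zpowers y) _) (one_mem _) hg

theorem dvd_of_commute (h : IsSplitMetacyclic x y m n k) {a : ℤ} {b : ℕ}
    (hc : Commute (y ^ b) (x ^ a)) : (m : ℤ) ∣ a * (k ^ b - 1) := by
  have hxa : x ^ (a * k ^ b) = x ^ a :=
    mul_right_cancel ((pow_mul_zpow_of_conj h.conj_eq b a).symm.trans hc.eq)
  rw [zpow_eq_zpow_iff_modEq, h.orderOf_eq.1] at hxa
  simpa [mul_sub] using hxa.symm.dvd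

theorem not_commute (h : IsSplitMetacyclic x y m n k) (hk : ¬ k ≡ 1 [ZMOD m]) :
    ¬ Commute y x := by
  intro hc
  have hc' : Commute (y ^ 1) (x ^ (1 : ℤ)) := by simpa using hc
  exact hk (Int.modEq_iff_dvd.mpr (by simpa using h.dvd_of_commute hc')).symm

theorem pow_modEq_one (h : IsSplitMetacyclic x y m n k) : k ^ n ≡ 1 [ZMOD m] := by
  have hc : Commute (y ^ n) (x ^ (1 : ℤ)) := by simp [h.pow_right]
  exact (Int.modEq_iff_dvd.mpr (by simpa using h.dvd_of_commute hc)).symm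

theorem zpowers_eq_closure_setOf_pow_eq_one (h : IsSplitMetacyclic x y m n k)
    (hmn : m.Coprime n) : zpowers x = closure {g : G | g ^ m = 1} := by
  refine le_antisymm (zpowers_le.mpr (subset_closure h.pow_left))
    ((closure_le _).mpr fun g hg => ?_)
  obtain ⟨a, b, rfl⟩ := h.exists_eq_zpow_mul_pow g
  have hyb : y ^ (b * m) = 1 := (h.eq_one_of_zpow_mul_pow_pow_eq_one hg).2
  rw [← orderOf_dvd_iff_pow_eq_one, h.orderOf_eq.2] at hyb
  rw [SetLike.mem_coe, orderOf_dvd_iff_pow_eq_one.mp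
    (h.orderOf_eq.2 ▸ hmn.symm.dvd_of_dvd_mul_right hyb), mul_one]
  exact zpow_mem_zpowers x a

theorem closure_setOf_pow_eq_one_le_closure_pow (h : IsSplitMetacyclic x y m n k) {p : ℕ}
    (hp : p.Prime) (hpn : p ∣ n) (hpm : ¬ p ∣ m) :
    closure {g : G | g ^ (m * (n / p)) = 1} ≤ closure {x, y ^ p} := by
  refine (closure_le _).mpr fun g hg => ?_
  obtain ⟨a, b, rfl⟩ := h.exists_eq_zpow_mul_pow g
  have hyb : y ^ (b * (m * (n / p))) = 1 := (h.eq_one_of_zpow_mul_pow_pow_eq_one hg).2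
  rw [← orderOf_dvd_iff_pow_eq_one, h.orderOf_eq.2] at hyb
  obtain ⟨q, rfl⟩ := hpn
  have hq : 0 < q := Nat.pos_of_mul_pos_left (Nat.pos_of_mul_pos_left (h.card_eq ▸ Nat.card_pos))
  rw [Nat.mul_div_cancel_left q hp.pos, ← mul_assoc] at hyb
  have hpb : p ∣ b :=
    (hp.dvd_mul.mp (Nat.dvd_of_mul_dvd_mul_right hq hyb)).resolve_right hpm
  obtain ⟨c, rfl⟩ := hpb
  rw [pow_mul]
  exact mul_mem (zpow_mem (subset_closure (by simp)) a) (pow_mem (subset_closure (by simp)) c)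

theorem notMem_closure_pow (h : IsSplitMetacyclic x y m n k) {p : ℕ} (hp : 1 < p)
    (hpn : p ∣ n) : y ∉ closure {x, y ^ p} := by
  intro hy
  obtain ⟨a, b, hab⟩ := exists_eq_zpow_mul_pow_of_mem_closure h.conj_eq (d := 1)
    (by simpa using hy)
  rw [one_mul] at hab
  have hyb : y ^ 1 = y ^ (p * b) := (pow_one y).trans (h.eq_and_eq_of_mul_eq_mul (one_mem _)
    (zpow_mem_zpowers x _) (mem_zpowers y) (pow_mem (mem_zpowers y) _) ((one_mul y).trans hab)).2
  rw [pow_eq_pow_iff_modEq, h.orderOf_eq.2] at hyb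
  have h1 : 1 ≡ 0 [MOD p] := (hyb.of_dvd hpn).trans (Nat.modEq_zero_iff_dvd.mpr (dvd_mul_right p b))
  exact hp.ne' (Nat.dvd_one.mp (Nat.modEq_zero_iff_dvd.mp h1))

theorem pow_modEq_one_of_isCyclic (h : IsSplitMetacyclic x y m n k) {p : ℕ} (hp : p.Prime)
    (hpn : p ∣ n) (hpm : ¬ p ∣ m)
    (hcyc : ∀ H : Subgroup G, H.Characteristic → H ≠ ⊤ → IsCyclic H) :
    k ^ p ≡ 1 [ZMOD m] := by
  set H := closure {g : G | g ^ (m * (n / p)) = 1}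
  have hxH : x ^ (1 : ℤ) ∈ H := subset_closure (by simp [pow_mul, h.pow_left])
  have hyH : y ^ p ∈ H := subset_closure (by
    rw [Set.mem_ofPred, ← pow_mul, mul_left_comm, Nat.mul_div_cancel' hpn, pow_mul', h.pow_right,
      one_pow])
  have hH : H ≠ ⊤ := fun htop => h.notMem_closure_pow hp.one_lt hpn
    (h.closure_setOf_pow_eq_one_le_closure_pow hp hpn hpm ((eq_top_iff' H).mp htop y))
  have := hcyc H (characteristic_closure_setOf_pow_eq_one _) hH
  exact (Int.modEq_iff_dvd.mpr (by simpa using h.dvd_of_commute (commute_of_isCyclic hyH hxH))).symm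

theorem closure_setOf_pow_eq_one_le_closure_zpow (h : IsSplitMetacyclic x y m n k)
    (hmn : m.Coprime n) {d : ℤ} (hdk : d ∣ k - 1) (hdm : d ∣ m) :
    closure {g : G | g ^ n = 1} ≤ closure {x ^ d, y} := by
  refine (closure_le _).mpr fun g hg => ?_
  obtain ⟨a, b, rfl⟩ := h.exists_eq_zpow_mul_pow g
  set S := ∑ i ∈ Finset.range n, k ^ (b * i)
  have hxa : x ^ (a * S) = 1 := (h.eq_one_of_zpow_mul_pow_pow_eq_one hg).1
  rw [← orderOf_dvd_iff_zpow_eq_one, h.orderOf_eq.1] at hxa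
  -- `k ≡ 1 [ZMOD d]`, so `S ≡ n [ZMOD d]` and `S` is prime to `d`
  have hS : d ∣ S - n := by
    have : k - 1 ∣ ∑ i ∈ Finset.range n, (k ^ (b * i) - 1) :=
      Finset.dvd_sum fun i _ => by simpa using sub_dvd_pow_sub_pow k 1 (b * i)
    simpa [S, Finset.sum_sub_distrib] using hdk.trans this
  obtain ⟨t, ht⟩ := hS
  have hdS : IsCoprime d S := by
    have hdn : IsCoprime d n :=
      (Nat.isCoprime_iff_coprime.mpr hmn).of_isCoprime_of_dvd_left hdm
    simpa [← ht] using hdn.add_mul_left_right t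
  obtain ⟨c, rfl⟩ := hdS.dvd_of_dvd_mul_right (hdm.trans hxa)
  rw [zpow_mul]
  exact mul_mem (zpow_mem (subset_closure (by simp)) c) (pow_mem (subset_closure (by simp)) b)

theorem isUnit_of_mem_closure_zpow (h : IsSplitMetacyclic x y m n k) {d : ℤ} (hdm : d ∣ m)
    (hx : x ∈ closure {x ^ d, y}) : IsUnit d := by
  obtain ⟨a, b, hab⟩ := exists_eq_zpow_mul_pow_of_mem_closure h.conj_eq (e := 1)
    (by simpa using hx)
  have hxa : x ^ (1 : ℤ) = x ^ (d * a) := (zpow_one x).trans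
    (h.eq_and_eq_of_mul_eq_mul (mem_zpowers x) (zpow_mem_zpowers x _) (one_mem _)
      (pow_mem (mem_zpowers y) _) ((mul_one x).trans hab)).1
  rw [zpow_eq_zpow_iff_modEq, h.orderOf_eq.1] at hxa
  exact isUnit_of_dvd_one ((dvd_sub_right (dvd_mul_right d a)).mp (hdm.trans hxa.dvd))

theorem gcd_sub_one_eq_one_of_isCyclic (h : IsSplitMetacyclic x y m n k) (hmn : m.Coprime n)
    (hk : ¬ k ≡ 1 [ZMOD m])
    (hcyc : ∀ H : Subgroup G, H.Characteristic → H ≠ ⊤ → IsCyclic H) :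
    Int.gcd (k - 1) m = 1 := by
  set H := closure {g : G | g ^ n = 1}
  have hyH : y ∈ H := subset_closure h.pow_right
  have hconjH : x ^ (1 - k) * y ∈ H := by
    have hconj : x ^ (1 - k) * y = x * y * x⁻¹ := by
      rw [zpow_sub, zpow_one, ← h.conj_eq]
      group
    refine subset_closure (show (x ^ (1 - k) * y) ^ n = 1 from ?_)
    rw [hconj, conj_pow, h.pow_right, mul_one, mul_inv_cancel]
  by_contra hd
  have hH : H ≠ ⊤ := fun htop => hd <| by
    simpa using Int.isUnit_iff_natAbs_eq.mp <| h.isUnit_of_mem_closure_zpow (Int.gcd_dvd_right _ _)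
      (h.closure_setOf_pow_eq_one_le_closure_zpow hmn (Int.gcd_dvd_left _ _)
        (Int.gcd_dvd_right _ _) ((eq_top_iff' H).mp htop x))
  have := hcyc H (characteristic_closure_setOf_pow_eq_one n) hH
  have hc : Commute (y ^ 1) (x ^ (1 - k)) := by
    simpa using (commute_of_isCyclic hyH hconjH).mul_right (Commute.refl y).inv_right
  have hsq : (m : ℤ) ∣ (k - 1) ^ 2 := by
    have hdvd := h.dvd_of_commute hc
    rwa [show (1 - k) * (k ^ 1 - 1) = -(k - 1) ^ 2 by ring, dvd_neg] at hdvd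
  exact hk (Int.modEq_iff_dvd.mpr (dvd_sub_one_of_dvd_sq (Nat.isCoprime_iff_coprime.mpr hmn)
    h.pow_modEq_one.symm.dvd hsq)).symm

theorem isCyclic_closure_pow (h : IsSplitMetacyclic x y m n k) (hmn : m.Coprime n) {p : ℕ}
    (hkp : k ^ p ≡ 1 [ZMOD m]) : IsCyclic (closure {x, y ^ p}) := by
  have hxk : x ^ k ^ p = x := by
    rw [← zpow_one x, ← zpow_mul, one_mul, zpow_eq_zpow_iff_modEq, h.orderOf_eq.1]
    exact hkp
  have hc : Commute x (y ^ p) := by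
    have hyx := pow_mul_zpow_of_conj h.conj_eq p 1
    rw [one_mul, zpow_one, hxk] at hyx
    exact hyx.symm
  refine hc.isCyclic_closure_pair (Nat.Coprime.coprime_dvd_right ?_ (h.orderOf_eq.1 ▸ hmn))
  exact orderOf_dvd_of_pow_eq_one (by rw [← pow_mul, mul_comm, pow_mul, h.pow_right, one_pow])

theorem le_closure_pow_of_normal {p α : ℕ} (h : IsSplitMetacyclic x y m (p ^ α) k)
    (hp : p.Prime) (hk : IsCoprime (k - 1) m) (hkp : k ^ p ≡ 1 [ZMOD m]) {N : Subgroup G}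
    [N.Normal] (hN : N ≠ ⊤) : N ≤ closure {x, y ^ p} := by
  intro g hg
  obtain ⟨a, b, rfl⟩ := h.exists_eq_zpow_mul_pow g
  by_cases hpb : p ∣ b
  · obtain ⟨c, rfl⟩ := hpb
    rw [pow_mul]
    exact mul_mem (zpow_mem (subset_closure (by simp)) a) (pow_mem (subset_closure (by simp)) c)
  refine absurd ?_ hN
  have hbp : b.Coprime p := (Nat.coprime_comm.mp ((hp.coprime_iff_not_dvd).mpr hpb))
  have hcomm : x ^ (k ^ b - 1) ∈ N := by
    have hyx := pow_mul_zpow_of_conj h.conj_eq b 1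
    rw [one_mul, zpow_one] at hyx
    have he : x ^ a * y ^ b * (x * (x ^ a * y ^ b)⁻¹ * x⁻¹) = x ^ (k ^ b - 1) := by
      calc x ^ a * y ^ b * (x * (x ^ a * y ^ b)⁻¹ * x⁻¹)
          = x ^ a * (y ^ b * x) * (y ^ b)⁻¹ * (x ^ a)⁻¹ * x⁻¹ := by group
        _ = x ^ (k ^ b - 1) := by rw [hyx, zpow_sub, zpow_one]; group
    exact he ▸ mul_mem hg (Subgroup.Normal.conj_mem ‹_› _ (inv_mem hg) x)
  have hxN : x ∈ N := by
    refine zpowers_le.mpr hcomm (mem_zpowers_zpow_iff.mpr ?_)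
    rw [h.orderOf_eq.1, ← Int.isCoprime_iff_gcd_eq_one]
    exact hk.pow_sub_one hkp.symm.dvd hbp hp.one_lt
  have hyN : y ∈ N := by
    have hyb : y ^ b ∈ N := by
      simpa using mul_mem (inv_mem (zpow_mem hxN a)) hg
    refine zpowers_le.mpr hyb (mem_zpowers_pow_iff.mpr ?_)
    rw [h.orderOf_eq.2]
    exact hbp.pow_right α
  rw [eq_top_iff, ← h.closure_eq_top, closure_le, Set.insert_subset_iff,
    Set.singleton_subset_iff]
  exact ⟨hxN, hyN⟩

end IsSplitMetacyclic

theorem CCS_iff_gcd_eq_one_Cpalpha_general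
    (p α m : ℕ) (hp : p.Prime) (hα : 1 ≤ α)
    (hcop : Nat.Coprime m p)
    (k : ℤ) (hk1 : ¬ k ≡ 1 [ZMOD (m : ℤ)])
    (G : Type*) [Group G] [Finite G] (x y : G)
    (hgen : Subgroup.closure ({x, y} : Set G) = ⊤)
    (hx : x ^ m = 1) (hy : y ^ (p ^ α) = 1) (hconj : y * x * y⁻¹ = x ^ k)
    (hcard : Nat.card G = m * p ^ α) :
    IsCCS G ↔ (Int.gcd (k - 1) m = 1 ∧ k ^ p ≡ 1 [ZMOD (m : ℤ)]) := by
  have hG : IsSplitMetacyclic x y m (p ^ α) k := ⟨hgen, hx, hy, hconj, hcard⟩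
  have hmn : m.Coprime (p ^ α) := hcop.pow_right α
  have hyx : ¬ Commute y x := hG.not_commute hk1
  constructor
  · rintro ⟨-, -, hcyc⟩
    exact ⟨hG.gcd_sub_one_eq_one_of_isCyclic hmn hk1 hcyc, hG.pow_modEq_one_of_isCyclic hp
      (dvd_pow_self p (by omega)) ((hp.coprime_iff_not_dvd).mp hcop.symm) hcyc⟩
  · rintro ⟨hd, hkp⟩
    refine ⟨fun _ => hyx (commute_of_isCyclic (H := ⊤) (mem_top y) (mem_top x)),
      ⟨zpowers x, ?_, fun hbot => hyx ?_, fun htop => hyx ?_⟩, fun N _ hN => ?_⟩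
    · rw [hG.zpowers_eq_closure_setOf_pow_eq_one hmn]
      exact characteristic_closure_setOf_pow_eq_one m
    · rw [zpowers_eq_bot.mp hbot]
      exact Commute.one_right y
    · obtain ⟨j, rfl⟩ := mem_zpowers_iff.mp ((eq_top_iff' _).mp htop y)
      exact (Commute.refl x).zpow_left j
    · have := hG.isCyclic_closure_pow hmn hkp
      exact isCyclic_of_le (hG.le_closure_pow_of_normal hp (Int.isCoprime_iff_gcd_eq_one.mpr hd)
        hkp hN)

/-- Let `p` be a prime, `α ≥ 1`, `m > 1` with `gcd(m, p) = 1` and `p` smaller than every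
prime divisor of `m`, and let `k` satisfy `gcd(m, k) = 1`, `k ≢ 1 (mod m)`,
`k^{p^α} ≡ 1 (mod m)`. A group `G` with presentation
`⟨x, y | x^m = y^{p^α} = 1, y x y⁻¹ = x^k⟩` (equivalently, a group of order `m·p^α`
generated by such `x, y`) is a CCS group iff `gcd(m, k - 1) = 1` and `k^p ≡ 1 (mod m)`. -/
theorem CCS_iff_gcd_eq_one_Cpalpha
    (p α m : ℕ) (hp : p.Prime) (hα : 1 ≤ α) (hm : 1 < m)
    (hcop : Nat.Coprime m p) (hlt : ∀ q : ℕ, q.Prime → q ∣ m → p < q)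
    (k : ℤ) (hk : Int.gcd k m = 1) (hk1 : ¬ k ≡ 1 [ZMOD (m : ℤ)])
    (hka : k ^ (p ^ α) ≡ 1 [ZMOD (m : ℤ)])
    (G : Type*) [Group G] [Finite G] (x y : G)
    (hgen : Subgroup.closure ({x, y} : Set G) = ⊤)
    (hx : x ^ m = 1) (hy : y ^ (p ^ α) = 1) (hconj : y * x * y⁻¹ = x ^ k)
    (hcard : Nat.card G = m * p ^ α) :
    IsCCS G ↔ (Int.gcd (k - 1) m = 1 ∧ k ^ p ≡ 1 [ZMOD (m : ℤ)]) :=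
  CCS_iff_gcd_eq_one_Cpalpha_general p α m hp hα hcop k hk1 G x y hgen hx hy hconj hcard
end

section
/- Let G be a nontrivial finite perfect group. Then G is a CCS group if and only if the center Z(G) is nontrivial, cyclic, and contains every proper characteristic subgroup of G (i.e., Z(G) is the unique maximal proper characteristic subgroup of G). -/
/-- A cyclic normal subgroup of a perfect group is central. -/
lemma cyclic_normal_le_center {G : Type*} [Group G] (N : Subgroup G) [N.Normal]
    (hN : IsCyclic N) (hperf : commutator G = ⊤) : N ≤ Subgroup.center G := by
  -- automorphisms of a cyclic group commute
  have hcomm : ∀ f g : MulAut N, f * g = g * f := by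
    intro f g
    obtain ⟨m, hm⟩ := MonoidHom.map_cyclic f.toMonoidHom
    obtain ⟨n, hn⟩ := MonoidHom.map_cyclic g.toMonoidHom
    simp only [MulEquiv.coe_toMonoidHom] at hm hn
    ext x
    have : f (g x) = g (f x) := by
      rw [hm, hn, hm, hn, ← zpow_mul, ← zpow_mul, mul_comm]
    simpa using congrArg Subtype.val this
  have hker : (MulAut.conjNormal : G →* MulAut N).ker = ⊤ := by
    rw [eq_top_iff, ← hperf, commutator_def, Subgroup.commutator_le]
    intro a _ b _
    rw [MonoidHom.mem_ker, map_commutatorElement]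
    exact commutatorElement_eq_one_iff_mul_comm.2 (hcomm _ _)
  intro n hn
  rw [Subgroup.mem_center_iff]
  intro g
  have hg : (MulAut.conjNormal g : MulAut N) = 1 := by
    have : g ∈ (MulAut.conjNormal : G →* MulAut N).ker := hker ▸ Subgroup.mem_top g
    exact this
  have h2 : g * n * g⁻¹ = n := by
    have := MulAut.conjNormal_apply g (⟨n, hn⟩ : N)
    rw [hg] at this
    simpa using this.symm
  calc g * n = (g * n * g⁻¹) * g := by group
    _ = n * g := by rw [h2]

/-- A nontrivial finite perfect group is a CCS group iff its center is nontrivial, cyclic,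
and contains every proper characteristic subgroup. -/
theorem perfect_CCS_iff_center
    (G : Type*) [Group G] [Finite G] [Nontrivial G] (hperf : commutator G = ⊤) :
    IsCCS G ↔
      (Subgroup.center G ≠ ⊥ ∧ IsCyclic (Subgroup.center G) ∧
        ∀ N : Subgroup G, N.Characteristic → N ≠ ⊤ → N ≤ Subgroup.center G) := by
  have hnotab : Subgroup.center G ≠ ⊤ := by
    intro h
    have hbot : commutator G = ⊥ := by
      rw [commutator_def, Subgroup.commutator_eq_bot_iff_le_centralizer]
      intro a _
      rw [Subgroup.mem_centralizer_iff]
      exact fun b _ => ((Subgroup.mem_center_iff.1 (h ▸ Subgroup.mem_top a)) b)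
    rw [hperf] at hbot
    exact (bot_ne_top (α := Subgroup G)) hbot.symm
  constructor
  · rintro ⟨hnc, ⟨N, hchar, hNbot, hNtop⟩, hcyc⟩
    have hle : ∀ M : Subgroup G, M.Characteristic → M ≠ ⊤ → M ≤ Subgroup.center G := by
      intro M hMchar hMtop
      have : M.Normal := Subgroup.normal_of_characteristic M
      exact cyclic_normal_le_center M (hcyc M hMchar hMtop) hperf
    refine ⟨?_, ?_, hle⟩
    · intro h
      exact hNbot (le_bot_iff.1 (h ▸ hle N hchar hNtop))
    · exact hcyc _ inferInstance hnotab
  · rintro ⟨hbot, hcyc, hle⟩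
    refine ⟨?_, ⟨Subgroup.center G, inferInstance, hbot, hnotab⟩, ?_⟩
    · intro h
      letI : CommGroup G := h.commGroup
      exact hnotab CommGroup.center_eq_top
    · intro N hchar hNtop
      exact Subgroup.isCyclic_of_le (hle N hchar hNtop)
end

section
/- Let G be a finite perfect CCS group. Then there exist a finite non-abelian simple group S and a positive integer n such that the quotient G/Z(G) is isomorphic to the direct product of n copies of S. -/
/-!
Cyclic groups have abelian automorphism groups, so in a perfect group every cyclic normal
subgroup is central. Hence for a perfect CCS group `G` the preimage of a proper characteristic
subgroup of `Q = G/Z(G)` lies in `Z(G)`, i.e. `Q` is characteristically simple. In a finite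
characteristically simple group the automorphic images of a minimal normal subgroup `N` generate
the whole group, and an irredundant subfamily of them is independent; so `Q ≅ N^n`, and `N` is
simple because each factor is normalised by itself and centralised by the others. `N` is
non-abelian since `Q` is perfect.
-/

open Subgroup
open scoped commutatorElement

theorem sup_sSup_sdiff_singleton {α : Type*} [CompleteLattice α] {s : Set α} {a : α} (ha : a ∈ s) :
    a ⊔ sSup (s \ {a}) = sSup s := by
  rw [← sSup_insert, Set.insert_sdiff_singleton, Set.insert_eq_of_mem ha]

theorem MulAut.commute_of_isCyclic {A : Type*} [Group A] [IsCyclic A] (a b : MulAut A) :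
    Commute a b :=
  (IsCyclic.mulAutMulEquiv A).injective <| by rw [map_mul, map_mul, mul_comm]

section

variable {G : Type*} [Group G]

theorem commutator_le_centralizer_of_isCyclic (N : Subgroup G) [N.Normal] [IsCyclic N] :
    commutator G ≤ centralizer (N : Set G) := by
  rw [commutator_def, commutator_le]
  intro g _ h _ n hn
  have hfix : MulAut.conjNormal ⁅g, h⁆ = (1 : MulAut N) := by
    rw [map_commutatorElement, commutatorElement_eq_one_iff_commute]
    exact MulAut.commute_of_isCyclic _ _
  have := congr_arg Subtype.val (DFunLike.congr_fun hfix ⟨n, hn⟩)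
  rw [MulAut.conjNormal_apply, MulAut.one_apply] at this
  exact (mul_inv_eq_iff_eq_mul.mp this).symm

theorem le_center_of_isCyclic (hG : commutator G = ⊤) (N : Subgroup G) [N.Normal] [IsCyclic N] :
    N ≤ center G := by
  have := commutator_le_centralizer_of_isCyclic N
  rwa [hG, top_le_iff, centralizer_eq_top_iff_subset] at this

theorem exists_mul_ne_mul_of_commutator_eq_top [Nontrivial G] (hG : commutator G = ⊤) :
    ∃ a b : G, a * b ≠ b * a := by
  by_contra! hcomm
  have : commutator G = ⊥ := by
    rw [commutator_def, commutator_eq_bot_iff_le_centralizer, top_le_iff,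
      centralizer_eq_top_iff_subset]
    exact fun a _ => mem_center_iff.mpr fun b => hcomm b a
  exact bot_ne_top (this.symm.trans hG)

theorem commutator_eq_top_of_surjective {H : Type*} [Group H] {f : G →* H}
    (hf : Function.Surjective f) (hG : commutator G = ⊤) : commutator H = ⊤ := by
  rw [commutator_def, ← map_top_of_surjective f hf, ← map_commutator, ← commutator_def, hG]

theorem Subgroup.Characteristic.comap_mk' (N : Subgroup G) [N.Characteristic]
    (M : Subgroup (G ⧸ N)) [hM : M.Characteristic] :
    (M.comap (QuotientGroup.mk' N)).Characteristic := by
  refine characteristic_iff_comap_eq.mpr fun φ => ?_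
  let φbar : G ⧸ N ≃* G ⧸ N := QuotientGroup.congr N N φ (characteristic_iff_map_eq.mp ‹_› φ)
  calc (M.comap (QuotientGroup.mk' N)).comap φ.toMonoidHom
      = (M.comap φbar.toMonoidHom).comap (QuotientGroup.mk' N) := rfl
    _ = M.comap (QuotientGroup.mk' N) := by rw [characteristic_iff_comap_eq.mp hM φbar]

namespace Subgroup

def IsMinimalNormal (N : Subgroup G) : Prop :=
  Minimal (fun K : Subgroup G => K.Normal ∧ K ≠ ⊥) N

variable (G) in
theorem exists_isMinimalNormal [Finite G] [Nontrivial G] :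
    ∃ N : Subgroup G, N.IsMinimalNormal :=
  (Set.toFinite {K : Subgroup G | K.Normal ∧ K ≠ ⊥}).exists_minimal ⟨⊤, inferInstance, top_ne_bot⟩

theorem characteristic_iSup_map_mulEquiv (H : Subgroup G) :
    (⨆ φ : G ≃* G, H.map φ.toMonoidHom).Characteristic := by
  refine characteristic_iff_map_le.mpr fun ψ => ?_
  rw [map_iSup]
  exact iSup_le fun φ => by rw [map_map]; exact le_iSup_of_le (φ.trans ψ) le_rfl

namespace IsMinimalNormal

variable {N : Subgroup G} (hN : N.IsMinimalNormal)
include hN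

theorem normal : N.Normal := hN.prop.1

theorem ne_bot : N ≠ ⊥ := hN.prop.2

theorem inf_eq_bot_or_le (K : Subgroup G) [K.Normal] : N ⊓ K = ⊥ ∨ N ≤ K := by
  have := hN.normal
  refine or_iff_not_imp_left.mpr fun h => ?_
  exact (hN.eq_of_le ⟨inferInstance, h⟩ inf_le_left).ge.trans inf_le_right

theorem map_mulEquiv {H : Type*} [Group H] (e : G ≃* H) :
    (N.map e.toMonoidHom).IsMinimalNormal := by
  have := hN.normal
  refine ⟨⟨this.map _ e.surjective, (map_eq_bot_iff_of_injective _ e.injective).not.mpr hN.ne_bot⟩,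
    fun K hK hle => ?_⟩
  have := hK.1
  have hpull : K.map e.symm.toMonoidHom ≤ N := by
    simpa [map_map] using map_mono (f := e.symm.toMonoidHom) hle
  have := hN.eq_of_le ⟨this.map _ e.symm.surjective,
    (map_eq_bot_iff_of_injective _ e.symm.injective).not.mpr hK.2⟩ hpull
  rw [← this, map_map]
  simp

theorem isSimpleGroup (h : N ⊔ centralizer N = ⊤) : IsSimpleGroup N := by
  have : Nontrivial N := (nontrivial_iff_ne_bot N).mpr hN.ne_bot
  refine ⟨fun K hK => ?_⟩
  have hnorm : (K.map N.subtype).Normal := by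
    rw [← normalizer_eq_top_iff, eq_top_iff, ← h, sup_le_iff]
    constructor
    · simpa [normalizer_eq_top_iff.mpr hK, ← MonoidHom.range_eq_map] using
        le_normalizer_map (H := K) N.subtype
    · exact (centralizer_le (map_subtype_le K)).trans (centralizer_le_normalizer _)
  rcases hN.inf_eq_bot_or_le (K.map N.subtype) with h | h
  · left
    rwa [inf_of_le_right (map_subtype_le K), map_eq_bot_iff_of_injective _ N.subtype_injective] at h
  · right
    rwa [← top_le_iff, ← map_le_map_iff_of_injective N.subtype_injective, ← MonoidHom.range_eq_map,
      range_subtype]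

end IsMinimalNormal

theorem sSupIndep_of_isMinimalNormal {s : Set (Subgroup G)} (hs : ∀ M ∈ s, M.IsMinimalNormal)
    (hirr : ∀ M ∈ s, sSup (s \ {M}) ≠ sSup s) : sSupIndep s := by
  intro M hM
  have := sSup_normal (s \ {M}) fun K hK => (hs K hK.1).normal
  rcases (hs M hM).inf_eq_bot_or_le (sSup (s \ {M})) with h | h
  · exact disjoint_iff.mpr h
  · exact (hirr M hM (by rw [← sup_sSup_sdiff_singleton hM, sup_eq_right.mpr h])).elim

theorem sSup_sdiff_singleton_le_centralizer {s : Set (Subgroup G)} (hnorm : ∀ M ∈ s, M.Normal)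
    (hind : sSupIndep s) {M : Subgroup G} (hM : M ∈ s) : sSup (s \ {M}) ≤ centralizer M := by
  have := hnorm M hM
  have := sSup_normal (s \ {M}) fun K hK => hnorm K hK.1
  exact fun x hx => mem_centralizer_iff.mpr fun m hm =>
    commute_of_normal_of_disjoint _ _ ‹_› ‹_› (hind hM) m x hm hx

theorem nonempty_mulEquiv_pi_of_sSupIndep {s : Set (Subgroup G)} [Finite s]
    (hnorm : ∀ M ∈ s, M.Normal) (hind : sSupIndep s) (htop : sSup s = ⊤) :
    Nonempty (G ≃* ∀ M : s, (M : Subgroup G)) := by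
  have := Fintype.ofFinite s
  have hcomm : Pairwise fun M K : s => ∀ x y : G, x ∈ (M : Subgroup G) → y ∈ (K : Subgroup G) →
      Commute x y := fun M K hMK =>
    commute_of_normal_of_disjoint _ _ (hnorm M M.2) (hnorm K K.2)
      (hind.pairwiseDisjoint M.2 K.2 (Subtype.coe_ne_coe.mpr hMK))
  have hinj := injective_noncommPiCoprod_of_iSupIndep ((sSupIndep_iff s).mp hind) (hcomm := hcomm)
  have hsurj : Function.Surjective (noncommPiCoprod hcomm) := by
    rw [← MonoidHom.range_eq_top, noncommPiCoprod_range, ← sSup_eq_iSup', htop]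
  exact ⟨(MulEquiv.ofBijective _ ⟨hinj, hsurj⟩).symm⟩

theorem exists_sSupIndep_subset_of_isMinimalNormal [Finite G] {t : Set (Subgroup G)}
    (hmin : ∀ M ∈ t, M.IsMinimalNormal) (htop : sSup t = ⊤) :
    ∃ s ⊆ t, sSupIndep s ∧ sSup s = ⊤ := by
  obtain ⟨s, ⟨hs, hstop⟩, hs_least⟩ := (Set.toFinite {u | u ⊆ t ∧ sSup u = ⊤}).exists_minimal
    ⟨t, subset_rfl, htop⟩
  have hirr : ∀ M ∈ s, sSup (s \ {M}) ≠ sSup s := fun M hM h =>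
    (hs_least ⟨Set.sdiff_subset.trans hs, h.trans hstop⟩ Set.sdiff_subset hM).2 rfl
  exact ⟨s, hs, sSupIndep_of_isMinimalNormal (fun M hM => hmin M (hs hM)) hirr, hstop⟩

theorem exists_isSimpleGroup_mulEquiv_pi [Finite G] [Nontrivial G]
    (hchar : ∀ M : Subgroup G, M.Characteristic → M = ⊥ ∨ M = ⊤) :
    ∃ (N : Subgroup G) (n : ℕ), 0 < n ∧ IsSimpleGroup N ∧ Nonempty (G ≃* (Fin n → N)) := by
  obtain ⟨N, hN⟩ := exists_isMinimalNormal G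
  have himages : sSup (Set.range fun φ : G ≃* G => N.map φ.toMonoidHom) = ⊤ := by
    rw [sSup_range]
    refine (hchar _ (characteristic_iSup_map_mulEquiv N)).resolve_left fun h => hN.ne_bot ?_
    exact le_bot_iff.mp (h ▸ le_iSup_of_le (MulEquiv.refl G) (map_id N).ge)
  obtain ⟨s, hs, hind, hstop⟩ := exists_sSupIndep_subset_of_isMinimalNormal
    (by rintro _ ⟨φ, rfl⟩; exact hN.map_mulEquiv φ) himages
  choose φ hφ using hs
  have hmin (M : Subgroup G) (hM : M ∈ s) : M.IsMinimalNormal := hφ hM ▸ hN.map_mulEquiv _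
  have hnorm (M : Subgroup G) (hM : M ∈ s) : M.Normal := (hmin M hM).normal
  let eN (M : s) : (M : Subgroup G) ≃* N :=
    ((equivMapOfInjective N _ (φ M.2).injective).trans (MulEquiv.subgroupCongr (hφ M.2))).symm
  obtain ⟨e⟩ := nonempty_mulEquiv_pi_of_sSupIndep hnorm hind hstop
  obtain ⟨M₀, hM₀⟩ : s.Nonempty :=
    Set.nonempty_iff_ne_empty.mpr fun h => bot_ne_top (by rw [← hstop, h, sSup_empty])
  have : Nonempty s := ⟨⟨M₀, hM₀⟩⟩
  have := (hmin M₀ hM₀).isSimpleGroup <| top_unique <|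
    calc ⊤ = M₀ ⊔ sSup (s \ {M₀}) := by rw [sup_sSup_sdiff_singleton hM₀, hstop]
      _ ≤ M₀ ⊔ centralizer M₀ :=
        sup_le_sup_left (sSup_sdiff_singleton_le_centralizer hnorm hind hM₀) M₀
  exact ⟨N, Nat.card s, Nat.card_pos, (eN ⟨M₀, hM₀⟩).symm.isSimpleGroup,
    ⟨e.trans ((MulEquiv.piCongrRight eN).trans
      (MulEquiv.arrowCongr (Finite.equivFin s) (MulEquiv.refl N)))⟩⟩

end Subgroup

theorem characteristic_quotient_center_eq_bot_or_eq_top (hG : commutator G = ⊤)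
    (hcyc : ∀ N : Subgroup G, N.Characteristic → N ≠ ⊤ → IsCyclic N)
    (M : Subgroup (G ⧸ center G)) [M.Characteristic] : M = ⊥ ∨ M = ⊤ := by
  have hπ := QuotientGroup.mk'_surjective (center G)
  rw [← map_comap_eq_self_of_surjective hπ M]
  have := Characteristic.comap_mk' (center G) M
  by_cases htop : M.comap (QuotientGroup.mk' (center G)) = ⊤
  · exact Or.inr (by rw [htop, map_top_of_surjective _ hπ])
  · have := hcyc _ this htop
    left
    rw [Subgroup.map_eq_bot_iff, QuotientGroup.ker_mk']
    exact le_center_of_isCyclic hG _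

end

/-- If `G` is a finite perfect CCS group, then `G/Z(G)` is isomorphic to a direct power
`S^n` (with `n ≥ 1`) of a finite non-abelian simple group `S`. -/
theorem perfect_CCS_central_quotient
    (G : Type*) [Group G] [Finite G] (hperf : commutator G = ⊤) (hccs : IsCCS G) :
    ∃ (S : Type) (_ : Group S) (n : ℕ), 0 < n ∧ Finite S ∧ IsSimpleGroup S ∧
      (∃ a b : S, a * b ≠ b * a) ∧
      Nonempty ((G ⧸ Subgroup.center G) ≃* (Fin n → S)) := by
  obtain ⟨hncyc, -, hcyc⟩ := hccs
  have : Nontrivial G := not_subsingleton_iff_nontrivial.mp fun _ => hncyc isCyclic_of_subsingleton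
  obtain ⟨a, b, hab⟩ := exists_mul_ne_mul_of_commutator_eq_top hperf
  have : Nontrivial (G ⧸ center G) :=
    ⟨⟨a, 1, fun h => hab (mem_center_iff.mp (QuotientGroup.eq_one_iff a |>.mp h) b).symm⟩⟩
  obtain ⟨N, n, hn, hN, ⟨e⟩⟩ := exists_isSimpleGroup_mulEquiv_pi fun M _ =>
    characteristic_quotient_center_eq_bot_or_eq_top hperf hcyc M
  obtain ⟨S, _, _, ⟨eS⟩⟩ := Finite.exists_type_univ_nonempty_mulEquiv.{_, 0} N
  have : IsSimpleGroup S := eS.symm.isSimpleGroup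
  let e' := e.trans (MulEquiv.arrowCongr (Equiv.refl _) eS)
  have hproj : Function.Surjective ((Pi.evalMonoidHom (fun _ => S) ⟨0, hn⟩).comp e'.toMonoidHom) :=
    (Function.surjective_eval _).comp e'.surjective
  refine ⟨S, _, n, hn, inferInstance, this, ?_, ⟨e'⟩⟩
  exact exists_mul_ne_mul_of_commutator_eq_top <| commutator_eq_top_of_surjective hproj <|
    commutator_eq_top_of_surjective (QuotientGroup.mk'_surjective _) hperf
end
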